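/- arXiv:2506.19083 — 7 statements merged into one kernel-verified Lean document; each statement's English description precedes it below -/
import Mathlib

section
/- Let intervals [ℓ_i, u_i] for i ∈ [n] define the feasible ranking set Σ (permutations respecting strict interval dominance), and let K = { T ⊆ [n] : |T| = k and ∃ σ ∈ Σ with σ(j) ≤ k for all j ∈ T } be the collection of feasible top-k sets. Sort intervals in decreasing order of lower bound ℓ. For each i ∈ [k+1], let K⁽ⁱ⁾ = { T ∈ K : i ∉ T and {1,…,i−1} ⊆ T }. Then K = ⋃_{i=1}^{k+1} K⁽ⁱ⁾. -/
/-- Rankings consistent with strict interval dominance. -/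
def FeasiblePerm (n : ℕ) (l u : Fin n → ℝ) : Set (Equiv.Perm (Fin n)) :=
  {σ | ∀ i j : Fin n, l i > u j → σ i < σ j}

/-- Feasible top-`k` sets: `k`-element subsets placed in the first `k` ranks by
some feasible ranking. (Ranks are 0-indexed: rank `< k` means "in the top `k`".) -/
def FeasibleTopK (n k : ℕ) (l u : Fin n → ℝ) : Set (Finset (Fin n)) :=
  {T | T.card = k ∧ ∃ σ ∈ FeasiblePerm n l u, ∀ j ∈ T, (σ j : ℕ) < k}

/-- With intervals sorted in decreasing order of lower bound, the collection
`K` of feasible top-`k` sets is the union over `i` ranging over the first `k+1` indices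
(0-indexed: `(i : ℕ) ≤ k`) of the subcollections `K⁽ⁱ⁾` of feasible top-`k` sets that
contain all indices before `i` and exclude `i`. -/
theorem feasibleTopK_eq_union (n k : ℕ) (hk : 1 ≤ k) (hkn : k < n)
    (l u : Fin n → ℝ)
    (hsorted : ∀ i j : Fin n, i ≤ j → l j ≤ l i) :
    FeasibleTopK n k l u =
      {T | ∃ i : Fin n, (i : ℕ) ≤ k ∧
        T ∈ FeasibleTopK n k l u ∧ i ∉ T ∧ ∀ j : Fin n, j < i → j ∈ T} := by
  ext T
  constructor
  · intro hT
    have hcard : T.card = k := hT.1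
    have hne : Tᶜ.Nonempty := by
      rw [← Finset.card_pos, Finset.card_compl, hcard, Fintype.card_fin]
      omega
    set i := Tᶜ.min' hne with hi
    have hiT : i ∉ T := by
      have := Tᶜ.min'_mem hne
      simpa using this
    have hlt : ∀ j : Fin n, j < i → j ∈ T := by
      intro j hj
      by_contra hjT
      have : i ≤ j := Tᶜ.min'_le j (by simpa using hjT)
      exact absurd hj (not_lt.2 this)
    refine ⟨i, ?_, hT, hiT, hlt⟩
    have hsub : Finset.Iio i ⊆ T := fun j hj => hlt j (Finset.mem_Iio.1 hj)
    have := Finset.card_le_card hsub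
    rwa [hcard, Fin.card_Iio] at this
  · rintro ⟨i, _, hT, _, _⟩
    exact hT
end

section
/- Let intervals [ℓ_i, u_i] for i ∈ [n] be sorted in decreasing order of ℓ, fix i ∈ [k+1] with i ≤ k+1 ≤ n, let S_i = { j > i : u_j ≥ ℓ_i }, and suppose |S_i| ≥ k − (i−1). Then the feasible top-k sets containing {1,…,i−1} but not i are exactly the sets {1,…,i−1} ∪ A with A ⊆ S_i and |A| = k − (i−1). Consequently, for any p ∈ [0,1]^n, the minimum of ∑_{j ∈ T} p_j over such sets T equals ∑_{j=1}^{i−1} p_j plus the sum of the k−(i−1) smallest values of p over S_i. -/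
open Classical

/-
A `k`-set `T` is a feasible top-`k` set exactly when no interval outside `T` strictly
dominates one inside `T`: necessity because a feasible ranking puts every `a ∉ T` at rank
`≥ k`, sufficiency because ranking `T` first and the rest afterwards, each block in index
order, respects dominance once the intervals are sorted by lower bound. For `T ⊇ {j < i}`
with `i ∉ T` this condition says exactly that every `j ∈ T` after `i` overlaps `[ℓ_i, u_i]`,
so the slice is `{j < i} ∪ A` with `A` a `(k - i)`-subset of `S_i`, and the minimal sum
splits accordingly.
-/

namespace Equiv.Perm

variable {n : ℕ}

lemma card_le_of_forall_apply_lt (σ : Perm (Fin n)) {T : Finset (Fin n)} {k : ℕ}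
    (hT : ∀ j ∈ T, (σ j : ℕ) < k) : T.card ≤ k := by
  simpa using Finset.card_le_card_of_injOn (fun j => (σ j : ℕ)) (t := Finset.range k)
    (fun j hj => Finset.mem_range.2 (hT j hj)) (fun a _ b _ h => σ.injective (Fin.ext h))

lemma le_apply_of_forall_apply_lt (σ : Perm (Fin n)) {T : Finset (Fin n)} {k : ℕ}
    (hTk : T.card = k) (hT : ∀ j ∈ T, (σ j : ℕ) < k) {a : Fin n} (ha : a ∉ T) :
    k ≤ (σ a : ℕ) := by
  by_contra! h
  have hcard := σ.card_le_of_forall_apply_lt (T := insert a T) (k := k)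
    (by simpa [Finset.forall_mem_insert] using ⟨h, hT⟩)
  rw [Finset.card_insert_of_notMem ha] at hcard
  omega

lemma card_filter_apply_lt (σ : Perm (Fin n)) (b : Fin n) :
    (Finset.univ.filter (fun x => σ x < σ b)).card = σ b := by
  have : Finset.univ.filter (fun x => σ x < σ b) =
      (Finset.Iio (σ b)).map σ.symm.toEmbedding := by
    ext x
    simp [Finset.mem_map_equiv]
  rw [this, Finset.card_map, Fin.card_Iio]

lemma apply_lt_card_of_forall_notMem (σ : Perm (Fin n)) {T : Finset (Fin n)} {b : Fin n}
    (hb : b ∈ T) (hσ : ∀ a ∉ T, σ b < σ a) : (σ b : ℕ) < T.card := by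
  have hsub : Finset.univ.filter (fun x => σ x < σ b) ⊆ T.erase b := by
    intro x hx
    have hx : σ x < σ b := (Finset.mem_filter.1 hx).2
    refine Finset.mem_erase.2 ⟨by rintro rfl; exact lt_irrefl _ hx, ?_⟩
    by_contra hxT
    exact lt_asymm hx (hσ x hxT)
  have hcard := Finset.card_le_card hsub
  rw [σ.card_filter_apply_lt, Finset.card_erase_of_mem hb] at hcard
  have hT := Finset.card_pos.2 ⟨b, hb⟩
  omega

end Equiv.Perm

lemma Tuple.sort_symm_lt_sort_symm {n : ℕ} {α : Type*} [LinearOrder α] {f : Fin n → α}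
    {a b : Fin n} (h : f a < f b) : (Tuple.sort f).symm a < (Tuple.sort f).symm b := by
  by_contra! hba
  have hle := Tuple.monotone_sort f hba
  simp only [Function.comp_apply, Equiv.apply_symm_apply] at hle
  exact hle.not_gt h

section FeasibleTopK

variable {n k : ℕ} {l u : Fin n → ℝ}

lemma lower_le_upper_of_mem_feasibleTopK {T : Finset (Fin n)} (hT : T ∈ FeasibleTopK n k l u)
    {a b : Fin n} (ha : a ∉ T) (hb : b ∈ T) : l a ≤ u b := by
  obtain ⟨hTk, σ, hσ, hσT⟩ := hT
  by_contra! hab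
  have hσab : (σ a : ℕ) < σ b := hσ a b hab
  have hka : k ≤ (σ a : ℕ) := σ.le_apply_of_forall_apply_lt hTk hσT ha
  have hbk : (σ b : ℕ) < k := hσT b hb
  omega

/-- Ranking `T` first and its complement after it, each in index order. -/
lemma mem_feasibleTopK_of_lower_le_upper (hdom : ∀ a b : Fin n, u b < l a → a < b)
    {T : Finset (Fin n)} (hTk : T.card = k) (hT : ∀ a ∉ T, ∀ b ∈ T, l a ≤ u b) :
    T ∈ FeasibleTopK n k l u := by
  let key : Fin n → ℕ := fun j => (if j ∈ T then 0 else n) + j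
  have key_lt : ∀ a ∉ T, ∀ b ∈ T, key b < key a := by
    intro a ha b hb
    simp only [key, if_pos hb, if_neg ha]
    omega
  refine ⟨hTk, (Tuple.sort key).symm, ?_, fun b hb => ?_⟩
  · intro a b hab
    apply Tuple.sort_symm_lt_sort_symm
    have hlt := Fin.lt_def.1 (hdom a b hab)
    by_cases ha : a ∈ T <;> by_cases hb : b ∈ T
    · simp only [key, if_pos ha, if_pos hb]; omega
    · exact key_lt b hb a ha
    · exact absurd (hT a ha b hb) (not_le.2 hab)
    · simp only [key, if_neg ha, if_neg hb]; omega
  · exact hTk ▸ Equiv.Perm.apply_lt_card_of_forall_notMem _ hb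
      (fun a ha => Tuple.sort_symm_lt_sort_symm (key_lt a ha b hb))

lemma mem_feasibleTopK_iff (hdom : ∀ a b : Fin n, u b < l a → a < b) {T : Finset (Fin n)} :
    T ∈ FeasibleTopK n k l u ↔ T.card = k ∧ ∀ a ∉ T, ∀ b ∈ T, l a ≤ u b :=
  ⟨fun hT => ⟨hT.1, fun _ ha _ hb => lower_le_upper_of_mem_feasibleTopK hT ha hb⟩,
    fun ⟨hTk, hT⟩ => mem_feasibleTopK_of_lower_le_upper hdom hTk hT⟩

lemma lt_of_upper_lt_lower (hsorted : ∀ a b : Fin n, a ≤ b → l b ≤ l a)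
    (hvalid : ∀ a : Fin n, l a ≤ u a) {a b : Fin n} (h : u b < l a) : a < b := by
  by_contra! hba
  linarith [hsorted b a hba, hvalid b]

lemma disjoint_filter_lt_of_subset_filter_gt {i : Fin n} {P : Fin n → Prop} [DecidablePred P]
    {A : Finset (Fin n)} (hA : A ⊆ Finset.univ.filter (fun j => i < j ∧ P j)) :
    Disjoint (Finset.univ.filter (fun j : Fin n => j < i)) A :=
  Finset.disjoint_left.2 fun _ hjB hjA =>
    (Finset.mem_filter.1 hjB).2.not_gt (Finset.mem_filter.1 (hA hjA)).2.1

lemma feasibleTopK_slice_iff (hsorted : ∀ a b : Fin n, a ≤ b → l b ≤ l a)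
    (hvalid : ∀ a : Fin n, l a ≤ u a) {i : Fin n} (hi : (i : ℕ) ≤ k) {T : Finset (Fin n)} :
    (T ∈ FeasibleTopK n k l u ∧ (∀ j : Fin n, j < i → j ∈ T) ∧ i ∉ T) ↔
      ∃ A ⊆ Finset.univ.filter (fun j : Fin n => i < j ∧ l i ≤ u j),
        A.card = k - (i : ℕ) ∧ T = Finset.univ.filter (fun j : Fin n => j < i) ∪ A := by
  have hB : (Finset.univ.filter (fun j : Fin n => j < i)).card = i := by
    simp [Finset.filter_gt_eq_Iio]
  rw [mem_feasibleTopK_iff (fun a b => lt_of_upper_lt_lower hsorted hvalid)]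
  constructor
  · rintro ⟨⟨hTk, hT⟩, hBT, hiT⟩
    have hBT : Finset.univ.filter (fun j : Fin n => j < i) ⊆ T := fun j hj =>
      hBT j (Finset.mem_filter.1 hj).2
    refine ⟨T \ Finset.univ.filter (fun j : Fin n => j < i), fun j hj => ?_, ?_,
      (Finset.union_sdiff_of_subset hBT).symm⟩
    · simp only [Finset.mem_sdiff, Finset.mem_filter, Finset.mem_univ, true_and, not_lt] at hj ⊢
      exact ⟨lt_of_le_of_ne hj.2 (by rintro rfl; exact hiT hj.1), hT i hiT j hj.1⟩
    · rw [Finset.card_sdiff_of_subset hBT, hTk, hB]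
  · rintro ⟨A, hAS, hAk, rfl⟩
    have hcard : (Finset.univ.filter (fun j : Fin n => j < i) ∪ A).card = k := by
      rw [Finset.card_union_of_disjoint (disjoint_filter_lt_of_subset_filter_gt hAS), hB, hAk]
      omega
    refine ⟨⟨hcard, fun a ha b hb => ?_⟩,
      fun j hj => Finset.mem_union_left _ (Finset.mem_filter.2 ⟨Finset.mem_univ _, hj⟩),
      fun hiT => ?_⟩
    · have hia : i ≤ a := not_lt.1 fun h => ha (Finset.mem_union_left _ (by simpa using h))
      have hib : l i ≤ u b := by
        rcases Finset.mem_union.1 hb with hbB | hbA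
        · exact (hsorted b i (Finset.mem_filter.1 hbB).2.le).trans (hvalid b)
        · exact (Finset.mem_filter.1 (hAS hbA)).2.2
      exact (hsorted i a hia).trans hib
    · rcases Finset.mem_union.1 hiT with hiB | hiA
      · exact lt_irrefl i (Finset.mem_filter.1 hiB).2
      · exact lt_irrefl i (Finset.mem_filter.1 (hAS hiA)).2.1

end FeasibleTopK

lemma isLeast_sInf_sum_of_card_le {ι : Type*} (S : Finset ι) (p : ι → ℝ) {m : ℕ}
    (hm : m ≤ S.card) :
    IsLeast {x : ℝ | ∃ A ⊆ S, A.card = m ∧ x = ∑ j ∈ A, p j}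
      (sInf {x : ℝ | ∃ A ⊆ S, A.card = m ∧ x = ∑ j ∈ A, p j}) := by
  have hfin : {x : ℝ | ∃ A ⊆ S, A.card = m ∧ x = ∑ j ∈ A, p j}.Finite :=
    (S.powerset.finite_toSet.image fun A => ∑ j ∈ A, p j).subset
      fun _ ⟨A, hAS, _, hx⟩ => ⟨A, Finset.mem_powerset.2 hAS, hx.symm⟩
  obtain ⟨A, hAS, hAm⟩ := Finset.exists_subset_card_eq hm
  exact ⟨Set.Nonempty.csInf_mem ⟨_, A, hAS, hAm, rfl⟩ hfin,
    fun _ hx => csInf_le hfin.bddBelow hx⟩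

theorem feasibleTopK_slice_characterization_general (n k : ℕ)
    (l u : Fin n → ℝ)
    (hsorted : ∀ a b : Fin n, a ≤ b → l b ≤ l a)
    (hvalid : ∀ a : Fin n, l a ≤ u a)
    (i : Fin n) (hi : (i : ℕ) ≤ k)
    (hScard : k - (i : ℕ) ≤
      (Finset.univ.filter (fun j : Fin n => i < j ∧ l i ≤ u j)).card) :
    ({T | T ∈ FeasibleTopK n k l u ∧ (∀ j : Fin n, j < i → j ∈ T) ∧ i ∉ T} =
      {T | ∃ A ⊆ Finset.univ.filter (fun j : Fin n => i < j ∧ l i ≤ u j),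
        A.card = k - (i : ℕ) ∧ T = Finset.univ.filter (fun j : Fin n => j < i) ∪ A}) ∧
    ∀ p : Fin n → ℝ, (∀ j, 0 ≤ p j ∧ p j ≤ 1) →
      IsLeast {x : ℝ | ∃ T ∈ FeasibleTopK n k l u,
          (∀ j : Fin n, j < i → j ∈ T) ∧ i ∉ T ∧ x = ∑ j ∈ T, p j}
        ((∑ j ∈ Finset.univ.filter (fun j : Fin n => j < i), p j) +
          sInf {x : ℝ | ∃ A ⊆ Finset.univ.filter (fun j : Fin n => i < j ∧ l i ≤ u j),
            A.card = k - (i : ℕ) ∧ x = ∑ j ∈ A, p j}) := by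
  have hslice (T : Finset (Fin n)) := feasibleTopK_slice_iff (T := T) hsorted hvalid hi
  refine ⟨Set.ext hslice, fun p _ => ?_⟩
  have hsum : {x : ℝ | ∃ T ∈ FeasibleTopK n k l u,
      (∀ j : Fin n, j < i → j ∈ T) ∧ i ∉ T ∧ x = ∑ j ∈ T, p j} =
      ((∑ j ∈ Finset.univ.filter (fun j : Fin n => j < i), p j) + ·) ''
        {x : ℝ | ∃ A ⊆ Finset.univ.filter (fun j : Fin n => i < j ∧ l i ≤ u j),
          A.card = k - (i : ℕ) ∧ x = ∑ j ∈ A, p j} := by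
    ext x
    constructor
    · rintro ⟨T, hT, hBT, hiT, rfl⟩
      obtain ⟨A, hAS, hAk, rfl⟩ := (hslice T).1 ⟨hT, hBT, hiT⟩
      exact ⟨_, ⟨A, hAS, hAk, rfl⟩,
        (Finset.sum_union (disjoint_filter_lt_of_subset_filter_gt hAS)).symm⟩
    · rintro ⟨_, ⟨A, hAS, hAk, rfl⟩, rfl⟩
      obtain ⟨hT, hBT, hiT⟩ := (hslice _).2 ⟨A, hAS, hAk, rfl⟩
      exact ⟨_, hT, hBT, hiT,
        (Finset.sum_union (disjoint_filter_lt_of_subset_filter_gt hAS)).symm⟩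
  rw [hsum]
  exact (monotone_id.const_add _).map_isLeast (isLeast_sInf_sum_of_card_le _ p hScard)

/-- Intervals sorted by decreasing lower bound; `i` among the first `k+1`
indices; `S_i` the later intervals overlapping `i`, with `|S_i| ≥ k - (i-1)` (0-indexed:
`k - i`). Then the feasible top-`k` sets containing all indices before `i` but not `i`
are exactly the sets `{j : j < i} ∪ A` with `A ⊆ S_i`, `|A| = k - i`; consequently, for
any `p ∈ [0,1]^n`, the least sum `∑_{j ∈ T} p_j` over such `T` is `∑_{j < i} p_j` plus
the minimum (= sum of the `k - i` smallest values of `p` on `S_i`) over such `A`. -/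
theorem feasibleTopK_slice_characterization (n k : ℕ) (hk : 1 ≤ k) (hkn : k < n)
    (l u : Fin n → ℝ)
    (hsorted : ∀ a b : Fin n, a ≤ b → l b ≤ l a)
    (hvalid : ∀ a : Fin n, l a ≤ u a)
    (i : Fin n) (hi : (i : ℕ) ≤ k)
    (hScard : k - (i : ℕ) ≤
      (Finset.univ.filter (fun j : Fin n => i < j ∧ l i ≤ u j)).card) :
    ({T | T ∈ FeasibleTopK n k l u ∧ (∀ j : Fin n, j < i → j ∈ T) ∧ i ∉ T} =
      {T | ∃ A ⊆ Finset.univ.filter (fun j : Fin n => i < j ∧ l i ≤ u j),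
        A.card = k - (i : ℕ) ∧ T = Finset.univ.filter (fun j : Fin n => j < i) ∪ A}) ∧
    ∀ p : Fin n → ℝ, (∀ j, 0 ≤ p j ∧ p j ≤ 1) →
      IsLeast {x : ℝ | ∃ T ∈ FeasibleTopK n k l u,
          (∀ j : Fin n, j < i → j ∈ T) ∧ i ∉ T ∧ x = ∑ j ∈ T, p j}
        ((∑ j ∈ Finset.univ.filter (fun j : Fin n => j < i), p j) +
          sInf {x : ℝ | ∃ A ⊆ Finset.univ.filter (fun j : Fin n => i < j ∧ l i ≤ u j),
            A.card = k - (i : ℕ) ∧ x = ∑ j ∈ A, p j}) :=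
  feasibleTopK_slice_characterization_general n k l u hsorted hvalid i hi hScard
end

section
/- Define the worst-case objective V(p) = min over feasible top-k sets T of ∑_{j∈T} p_j. Suppose a, b ∈ [n] satisfy ℓ_a > u_b (interval a strictly dominates interval b). Let q be obtained from p ∈ [0,1]^n by transferring mass d = min{p_b, 1 − p_a} from p_b to p_a (i.e., q_b = p_b − d, q_a = p_a + d, q_r = p_r otherwise). Then V(q) ≥ V(p), ∑ q = ∑ p, q ∈ [0,1]^n, and after the transfer either q_a = 1 or q_b = 0. -/
open Finset

lemma FeasibleTopK.mem_of_lt {n k : ℕ} {l u : Fin n → ℝ} {T : Finset (Fin n)}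
    (hT : T ∈ FeasibleTopK n k l u) {a b : Fin n} (hab : u b < l a) (hb : b ∈ T) : a ∈ T := by
  obtain ⟨hcard, σ, hσ, hrank⟩ := hT
  by_contra ha
  -- `insert a T` would be `k + 1` elements with distinct ranks below `k`.
  have hle : (insert a T).card ≤ (range k).card := by
    refine card_le_card_of_injOn (fun j => (σ j : ℕ)) ?_ ?_
    · intro j hj
      rcases mem_insert.mp hj with rfl | hj
      · exact mem_range.mpr ((Fin.lt_def.mp (hσ j b hab)).trans (hrank b hb))
      · exact mem_range.mpr (hrank j hj)
    · intro x _ y _ hxy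
      exact σ.injective (Fin.ext hxy)
  rw [card_insert_of_notMem ha, hcard, card_range] at hle
  omega

section Transfer

variable {ι : Type*} [DecidableEq ι]

lemma update_update_eq_add_single_sub_single {a b : ι} (hab : a ≠ b) (p : ι → ℝ) (d : ℝ) :
    Function.update (Function.update p b (p b - d)) a (p a + d) =
      p + Pi.single a d - Pi.single b d := by
  ext j
  rcases eq_or_ne j a with rfl | hja
  · simp [hab]
  · rcases eq_or_ne j b with rfl | hjb
    · simp [hja]
    · simp [hja, hjb]

lemma sum_le_sum_add_single_sub_single {T : Finset ι} {a b : ι} (hba : b ∈ T → a ∈ T)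
    (p : ι → ℝ) {d : ℝ} (hd : 0 ≤ d) :
    ∑ j ∈ T, p j ≤ ∑ j ∈ T, (p + Pi.single a d - Pi.single b d : ι → ℝ) j := by
  simp only [Pi.add_apply, Pi.sub_apply, sum_sub_distrib, sum_add_distrib, sum_pi_single']
  split_ifs <;> simp_all

lemma sum_add_single_sub_single [Fintype ι] (a b : ι) (p : ι → ℝ) (d : ℝ) :
    ∑ j, (p + Pi.single a d - Pi.single b d : ι → ℝ) j = ∑ j, p j := by
  simp [sum_add_distrib]

end Transfer

lemma sInf_le_sInf_of_forall_le {ι : Type*} {S : Set ι} {f g : ι → ℝ}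
    (hf : BddBelow {x | ∃ T ∈ S, x = f T}) (hfg : ∀ T ∈ S, f T ≤ g T) :
    sInf {x | ∃ T ∈ S, x = f T} ≤ sInf {x | ∃ T ∈ S, x = g T} := by
  rcases S.eq_empty_or_nonempty with rfl | ⟨T, hT⟩
  · simp
  · refine le_csInf ⟨g T, T, hT, rfl⟩ ?_
    rintro _ ⟨T', hT', rfl⟩
    exact (csInf_le hf ⟨T', hT', rfl⟩).trans (hfg T' hT')

/-- if interval `a` strictly dominates interval `b` and `q` is obtained from
`p` by transferring mass `d = min (p b) (1 - p a)` from coordinate `b` to coordinate `a`,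
then the worst-case objective `V(p) = min_{T feasible top-k} ∑_{j∈T} p_j` does not
decrease, the total mass is preserved, `q ∈ [0,1]^n`, and afterwards `q a = 1 ∨ q b = 0`. -/
theorem transfer_mass_improves (n k : ℕ) (l u : Fin n → ℝ)
    (hvalid : ∀ i : Fin n, l i ≤ u i)
    (a b : Fin n) (hab : l a > u b)
    (p : Fin n → ℝ) (hp : ∀ i, 0 ≤ p i ∧ p i ≤ 1)
    (q : Fin n → ℝ)
    (hq : q = Function.update
        (Function.update p b (p b - min (p b) (1 - p a))) a
        (p a + min (p b) (1 - p a))) :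
    sInf {x : ℝ | ∃ T ∈ FeasibleTopK n k l u, x = ∑ j ∈ T, p j} ≤
      sInf {x : ℝ | ∃ T ∈ FeasibleTopK n k l u, x = ∑ j ∈ T, q j} ∧
    (∑ i, q i = ∑ i, p i) ∧
    (∀ i, 0 ≤ q i ∧ q i ≤ 1) ∧
    (q a = 1 ∨ q b = 0) := by
  have hne : a ≠ b := fun h => (hvalid b).not_gt (h ▸ hab)
  set d := min (p b) (1 - p a) with hd
  have hd_nonneg : 0 ≤ d := le_min (hp b).1 (by linarith [(hp a).2])
  have hdb : d ≤ p b := min_le_left _ _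
  have hda : d ≤ 1 - p a := min_le_right _ _
  rw [update_update_eq_add_single_sub_single hne] at hq
  subst hq
  refine ⟨?_, sum_add_single_sub_single a b p d, fun i => ?_, ?_⟩
  · refine sInf_le_sInf_of_forall_le ⟨0, ?_⟩ fun T hT =>
      sum_le_sum_add_single_sub_single (FeasibleTopK.mem_of_lt hT hab) p hd_nonneg
    rintro _ ⟨T, -, rfl⟩
    exact sum_nonneg fun j _ => (hp j).1
  · simp only [Pi.add_apply, Pi.sub_apply, Pi.single_apply]
    split_ifs <;> subst_vars
    all_goals first | exact (hne rfl).elim | constructor <;> linarith [hp i]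
  · simp only [Pi.add_apply, Pi.sub_apply, Pi.single_eq_same, Pi.single_eq_of_ne hne,
      Pi.single_eq_of_ne hne.symm]
    rcases min_choice (p b) (1 - p a) with h | h <;> rw [h] at hd
    · right; linarith
    · left; linarith
end

section
/- For intervals [ℓ_i, u_i], i ∈ [n], define A(i) = |{ r : ℓ_r > u_i }| and B(i) = |{ r : ℓ_i > u_r }|. Then: (a) if B(i) ≥ n − k, then interval i belongs to every feasible top-k set; (b) if A(i) ≥ k, then interval i belongs to no feasible top-k set. -/
open Classical

lemma card_filter_lt_fin (n k : ℕ) (hkn : k ≤ n) :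
    (Finset.univ.filter (fun x : Fin n => (x : ℕ) < k)).card = k := by
  have : Finset.univ.filter (fun x : Fin n => (x : ℕ) < k)
      = (Finset.univ : Finset (Fin k)).map (Fin.castLEEmb hkn) := by
    ext x
    simp [Fin.castLEEmb]
    constructor
    · intro hx; exact ⟨⟨x, hx⟩, rfl⟩
    · rintro ⟨a, rfl⟩; exact a.isLt
  rw [this]; simp

/-- (a) if the number `B(i)` of intervals strictly below `i` is at least
`n - k`, then `i` is in every feasible top-`k` set; (b) if the number `A(i)` of intervals
strictly above `i` is at least `k`, then `i` is in no feasible top-`k` set. -/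
theorem prune_above_below (n k : ℕ) (hk : 1 ≤ k) (hkn : k ≤ n)
    (l u : Fin n → ℝ) (i : Fin n) :
    ((n - k ≤ (Finset.univ.filter (fun r : Fin n => l i > u r)).card →
        ∀ T ∈ FeasibleTopK n k l u, i ∈ T) ∧
     (k ≤ (Finset.univ.filter (fun r : Fin n => l r > u i)).card →
        ∀ T ∈ FeasibleTopK n k l u, i ∉ T)) := by
  constructor
  · intro hB T hT
    obtain ⟨hcard, σ, hσ, hrank⟩ := hT
    have hsub : (Finset.univ.filter (fun r : Fin n => l i > u r)).image σ
        ⊆ Finset.Ioi (σ i) := by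
      intro x hx
      simp only [Finset.mem_image, Finset.mem_filter] at hx
      obtain ⟨r, ⟨_, hr⟩, rfl⟩ := hx
      exact Finset.mem_Ioi.mpr (hσ i r hr)
    have hle : (Finset.univ.filter (fun r : Fin n => l i > u r)).card
        ≤ (Finset.Ioi (σ i)).card := by
      calc (Finset.univ.filter (fun r : Fin n => l i > u r)).card
          = ((Finset.univ.filter (fun r : Fin n => l i > u r)).image σ).card := by
            rw [Finset.card_image_of_injective _ σ.injective]
        _ ≤ _ := Finset.card_le_card hsub
    rw [Fin.card_Ioi] at hle
    have hilt : (σ i : ℕ) < n := (σ i).isLt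
    have hik : (σ i : ℕ) < k := by omega
    have hTimg : T.image σ = Finset.univ.filter (fun x : Fin n => (x : ℕ) < k) := by
      apply Finset.eq_of_subset_of_card_le
      · intro x hx
        simp only [Finset.mem_image] at hx
        obtain ⟨j, hj, rfl⟩ := hx
        simp [hrank j hj]
      · rw [card_filter_lt_fin n k hkn, Finset.card_image_of_injective _ σ.injective, hcard]
    have : σ i ∈ T.image σ := by
      rw [hTimg]; simp [hik]
    obtain ⟨j, hj, hji⟩ := Finset.mem_image.mp this
    rwa [σ.injective hji] at hj
  · intro hA T hT hi
    obtain ⟨hcard, σ, hσ, hrank⟩ := hT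
    have hsub : (Finset.univ.filter (fun r : Fin n => l r > u i)).image σ
        ⊆ Finset.Iio (σ i) := by
      intro x hx
      simp only [Finset.mem_image, Finset.mem_filter] at hx
      obtain ⟨r, ⟨_, hr⟩, rfl⟩ := hx
      exact Finset.mem_Iio.mpr (hσ r i hr)
    have hle : (Finset.univ.filter (fun r : Fin n => l r > u i)).card
        ≤ (Finset.Iio (σ i)).card := by
      calc (Finset.univ.filter (fun r : Fin n => l r > u i)).card
          = ((Finset.univ.filter (fun r : Fin n => l r > u i)).image σ).card := by
            rw [Finset.card_image_of_injective _ σ.injective]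
        _ ≤ _ := Finset.card_le_card hsub
    rw [Fin.card_Iio] at hle
    have := hrank i hi
    omega
end

section
/- Let i, j ∈ [n] be intervals such that every interval strictly above i is strictly above j and every interval strictly below j is strictly below i (i.e., A(i) ⊆ A(j) and B(j) ⊆ B(i) as sets). Let p ∈ [0,1]^n with p_j > p_i, and let q be p with coordinates i and j exchanged. Then for the worst-case objective V(p) = min_{σ∈Σ} ∑_r p_r·1[σ(r) ≤ k], we have V(q) ≥ V(p). -/
/-!
For every feasible ranking `σ` we exhibit a feasible `τ` whose top-`k` mass under `p` is at
most the top-`k` mass of `σ` under `q = p ∘ swap i j`. If `σ` ranks `j` before `i`, then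
`τ = σ ∘ swap i j` is feasible (an interval ranked between `j` and `i` can neither lie strictly
above `i` nor strictly below `j`) and has exactly that mass. Otherwise `i` is among the top `k`
whenever `j` is, and moving the larger weight `p j` onto `i` can only increase the top-`k` mass,
so `τ = σ` works.
-/

open Classical

open Finset Equiv

theorem Finset.sum_filter_comp_equiv {α M : Type*} [Fintype α] [AddCommMonoid M]
    (e : Perm α) (P : α → Prop) [DecidablePred P] (f : α → M) :
    ∑ r ∈ univ.filter (fun r => P (e r)), f r = ∑ r ∈ univ.filter P, f (e.symm r) := by
  rw [sum_filter, sum_filter, ← e.symm.sum_comp]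
  simp

theorem Finset.sum_le_sum_comp_swap {α M : Type*} [DecidableEq α] [AddCommMonoid M]
    [PartialOrder M] [IsOrderedAddMonoid M] {s : Finset α} {f : α → M} {i j : α}
    (hf : f i ≤ f j) (hs : j ∈ s → i ∈ s) :
    ∑ r ∈ s, f r ≤ ∑ r ∈ s, f (swap i j r) := by
  by_cases hj : j ∈ s
  · refine ((swap i j).sum_comp s f fun r hr => ?_).ge
    obtain ⟨-, rfl | rfl⟩ := swap_apply_ne_self_iff.mp hr
    exacts [hs hj, hj]
  have hfix : ∀ r ∈ s.erase i, f (swap i j r) = f r := fun r hr =>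
    congrArg f <| swap_apply_of_ne_of_ne (ne_of_mem_erase hr)
      (ne_of_mem_of_not_mem (mem_of_mem_erase hr) hj)
  by_cases hi : i ∈ s
  · rw [← add_sum_erase s _ hi, ← add_sum_erase s _ hi, swap_apply_left, sum_congr rfl hfix]
    exact add_le_add_left hf _
  · rw [erase_eq_of_notMem hi] at hfix
    exact (sum_congr rfl hfix).ge

theorem Real.sInf_le_sInf_of_forall_exists_le {ι : Type*} [Finite ι] {s : Set ι} {f g : ι → ℝ}
    (h : ∀ a ∈ s, ∃ b ∈ s, f b ≤ g a) :
    sInf {x | ∃ a ∈ s, x = f a} ≤ sInf {x | ∃ a ∈ s, x = g a} := by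
  rcases s.eq_empty_or_nonempty with rfl | ⟨a₀, ha₀⟩
  · simp
  have hbdd : BddBelow {x | ∃ a ∈ s, x = f a} :=
    ((Set.finite_range f).subset (by rintro _ ⟨a, -, rfl⟩; exact ⟨a, rfl⟩)).bddBelow
  refine le_csInf ⟨g a₀, a₀, ha₀, rfl⟩ ?_
  rintro _ ⟨a, ha, rfl⟩
  obtain ⟨b, hb, hba⟩ := h a ha
  exact (csInf_le hbdd ⟨b, hb, rfl⟩).trans hba

namespace FeasiblePerm

variable {n : ℕ} {l u : Fin n → ℝ} {σ : Perm (Fin n)}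

theorem mul_swap_mem (hσ : σ ∈ FeasiblePerm n l u) {i j : Fin n}
    (hA : ∀ r, l r > u i → l r > u j) (hB : ∀ r, l j > u r → l i > u r) (hji : σ j < σ i) :
    σ * swap i j ∈ FeasiblePerm n l u := by
  intro a b hab
  simp only [Perm.mul_apply, swap_apply_def]
  split_ifs <;> subst_vars <;> grind [FeasiblePerm]

end FeasiblePerm

theorem exchange_lemma_general (n k : ℕ) (l u : Fin n → ℝ)
    (i j : Fin n)
    (hA : ∀ r : Fin n, l r > u i → l r > u j)
    (hB : ∀ r : Fin n, l j > u r → l i > u r)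
    (p : Fin n → ℝ) (hpij : p i < p j) :
    sInf {x : ℝ | ∃ σ ∈ FeasiblePerm n l u,
        x = ∑ r ∈ Finset.univ.filter (fun r : Fin n => (σ r : ℕ) < k), p r} ≤
    sInf {x : ℝ | ∃ σ ∈ FeasiblePerm n l u,
        x = ∑ r ∈ Finset.univ.filter (fun r : Fin n => (σ r : ℕ) < k),
              p (Equiv.swap i j r)} := by
  refine Real.sInf_le_sInf_of_forall_exists_le fun σ hσ => ?_
  rcases lt_or_ge (σ j) (σ i) with hji | hij
  · refine ⟨σ * swap i j, FeasiblePerm.mul_swap_mem hσ hA hB hji, ?_⟩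
    have hmass := sum_filter_comp_equiv (swap i j) (fun r => (σ r : ℕ) < k) p
    rw [symm_swap] at hmass
    exact hmass.le
  · refine ⟨σ, hσ, sum_le_sum_comp_swap hpij.le fun hj => ?_⟩
    simpa using (mem_filter.mp hj).2.trans_le' hij

/-- exchange lemma. If every interval strictly above `i` is strictly above
`j` and every interval strictly below `j` is strictly below `i`, and `p j > p i`, then
exchanging coordinates `i` and `j` of `p` (giving `q = p ∘ swap i j`) cannot decrease
the worst-case objective `V(p) = min_{σ ∈ Σ} ∑_r p_r · 1[σ(r) < k]`. -/
theorem exchange_lemma (n k : ℕ) (l u : Fin n → ℝ)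
    (hvalid : ∀ r : Fin n, l r ≤ u r)
    (i j : Fin n)
    (hA : ∀ r : Fin n, l r > u i → l r > u j)
    (hB : ∀ r : Fin n, l j > u r → l i > u r)
    (p : Fin n → ℝ) (hp : ∀ r, 0 ≤ p r ∧ p r ≤ 1) (hpij : p i < p j) :
    sInf {x : ℝ | ∃ σ ∈ FeasiblePerm n l u,
        x = ∑ r ∈ Finset.univ.filter (fun r : Fin n => (σ r : ℕ) < k), p r} ≤
    sInf {x : ℝ | ∃ σ ∈ FeasiblePerm n l u,
        x = ∑ r ∈ Finset.univ.filter (fun r : Fin n => (σ r : ℕ) < k),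
              p (Equiv.swap i j r)} :=
  exchange_lemma_general n k l u i j hA hB p hpij
end

section
/- Let n = 4 and k = 1 with intervals: interval 1 and interval 2 overlapping each other, intervals 3 and 4 strictly below interval 1 but overlapping interval 2 (concretely ℓ_1 > u_3, ℓ_1 > u_4, and intervals 2,3,4 pairwise overlap, intervals 1,2 overlap). Then the unique maximizer p of min over feasible top-1 sets of the selected probability, subject to p ∈ [0,1]^4 with ∑p_i = 1, is p = (1/2, 1/2, 0, 0); while for k = 2 the unique maximizer subject to ∑p_i = 2 is p = (1, 1/3, 1/3, 1/3). In particular p_2 decreases from 1/2 to 1/3 as the budget increases from 1 to 2, so no ex ante optimal selection rule is monotone in budget. -/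
/-- Worst-case objective: minimum over feasible top-`k` sets of the selected mass. -/
noncomputable def wcObj (n k : ℕ) (l u : Fin n → ℝ) (p : Fin n → ℝ) : ℝ :=
  sInf {x : ℝ | ∃ T ∈ FeasibleTopK n k l u, x = ∑ j ∈ T, p j}

/-- Feasible marginals with budget `k`. -/
def FeasMarg (n k : ℕ) (p : Fin n → ℝ) : Prop :=
  (∀ i, 0 ≤ p i ∧ p i ≤ 1) ∧ ∑ i, p i = (k : ℝ)

/-!
Only items `2` and `3` are strictly dominated, and both only by item `0`. So the feasible
top-1 sets are `{0}` and `{1}`, the feasible top-2 sets are `{0, j}` for `j ≠ 0`, and the objective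
is `min (p 0) (p 1)` for budget 1 and `p 0 + min (p 1) (min (p 2) (p 3))` for budget 2. The first is
at most half of `p 0 + p 1 ≤ 1`; the second is at most `p 0 + (2 - p 0) / 3 ≤ 4 / 3`, with equality
only if `p 0 = 1` and the remaining mass is split evenly.
-/

open Finset

lemma wcObj_eq_inf' {n k : ℕ} {l u : Fin n → ℝ} {S : Finset (Finset (Fin n))}
    (hS : S.Nonempty) (hF : FeasibleTopK n k l u = S) (p : Fin n → ℝ) :
    wcObj n k l u p = S.inf' hS (fun T => ∑ j ∈ T, p j) := by
  rw [inf'_eq_csInf_image, wcObj, hF]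
  congr 1
  ext x
  simp [eq_comm]

section

variable {l u : Fin 4 → ℝ}

lemma dominates_iff (hvalid : ∀ i, l i ≤ u i)
    (h12 : l 0 ≤ u 1 ∧ l 1 ≤ u 0)
    (h13 : l 0 > u 2) (h14 : l 0 > u 3)
    (h23 : l 1 ≤ u 2 ∧ l 2 ≤ u 1)
    (h24 : l 1 ≤ u 3 ∧ l 3 ≤ u 1)
    (h34 : l 2 ≤ u 3 ∧ l 3 ≤ u 2) (i j : Fin 4) :
    l i > u j ↔ i = 0 ∧ (j = 2 ∨ j = 3) := by
  have := hvalid 0; have := hvalid 1; have := hvalid 2; have := hvalid 3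
  fin_cases i <;> fin_cases j <;> simp <;> linarith

lemma feasiblePerm_eq (hvalid : ∀ i, l i ≤ u i)
    (h12 : l 0 ≤ u 1 ∧ l 1 ≤ u 0)
    (h13 : l 0 > u 2) (h14 : l 0 > u 3)
    (h23 : l 1 ≤ u 2 ∧ l 2 ≤ u 1)
    (h24 : l 1 ≤ u 3 ∧ l 3 ≤ u 1)
    (h34 : l 2 ≤ u 3 ∧ l 3 ≤ u 2) :
    FeasiblePerm 4 l u = {σ | σ 0 < σ 2 ∧ σ 0 < σ 3} := by
  ext σ
  simp only [FeasiblePerm, Set.mem_ofPred_eq, dominates_iff hvalid h12 h13 h14 h23 h24 h34]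
  constructor
  · intro h
    exact ⟨h 0 2 ⟨rfl, .inl rfl⟩, h 0 3 ⟨rfl, .inr rfl⟩⟩
  · rintro ⟨h02, h03⟩ i j ⟨rfl, rfl | rfl⟩
    exacts [h02, h03]

lemma feasibleTopK_one_eq (hP : FeasiblePerm 4 l u = {σ | σ 0 < σ 2 ∧ σ 0 < σ 3}) :
    FeasibleTopK 4 1 l u = ↑({{0}, {1}} : Finset (Finset (Fin 4))) := by
  ext T
  simp only [FeasibleTopK, hP, Set.mem_ofPred_eq, coe_insert, coe_singleton,
    Set.mem_insert_iff, Set.mem_singleton_iff]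
  revert T
  decide

lemma feasibleTopK_two_eq (hP : FeasiblePerm 4 l u = {σ | σ 0 < σ 2 ∧ σ 0 < σ 3}) :
    FeasibleTopK 4 2 l u = ↑({{0, 1}, {0, 2}, {0, 3}} : Finset (Finset (Fin 4))) := by
  ext T
  simp only [FeasibleTopK, hP, Set.mem_ofPred_eq, coe_insert, coe_singleton,
    Set.mem_insert_iff, Set.mem_singleton_iff]
  revert T
  decide

lemma wcObj_one_eq (hP : FeasiblePerm 4 l u = {σ | σ 0 < σ 2 ∧ σ 0 < σ 3}) (p : Fin 4 → ℝ) :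
    wcObj 4 1 l u p = min (p 0) (p 1) := by
  rw [wcObj_eq_inf' (by simp) (feasibleTopK_one_eq hP)]
  simp [inf'_insert]

lemma wcObj_two_eq (hP : FeasiblePerm 4 l u = {σ | σ 0 < σ 2 ∧ σ 0 < σ 3}) (p : Fin 4 → ℝ) :
    wcObj 4 2 l u p = p 0 + min (p 1) (min (p 2) (p 3)) := by
  rw [wcObj_eq_inf' (by simp) (feasibleTopK_two_eq hP)]
  simp [inf'_insert, min_add_add_left]

end

namespace FeasMarg

variable {p : Fin 4 → ℝ}

lemma min_le_half (hp : FeasMarg 4 1 p) : min (p 0) (p 1) ≤ 1 / 2 := by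
  obtain ⟨hbd, hsum⟩ := hp
  simp only [Fin.sum_univ_four, Nat.cast_one] at hsum
  linarith [min_le_left (p 0) (p 1), min_le_right (p 0) (p 1), (hbd 2).1, (hbd 3).1]

lemma eq_of_min_eq_half (hp : FeasMarg 4 1 p) (h : min (p 0) (p 1) = 1 / 2) :
    p = ![1 / 2, 1 / 2, 0, 0] := by
  obtain ⟨hbd, hsum⟩ := hp
  simp only [Fin.sum_univ_four, Nat.cast_one] at hsum
  have h0 : 1 / 2 ≤ p 0 := h ▸ min_le_left _ _
  have h1 : 1 / 2 ≤ p 1 := h ▸ min_le_right _ _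
  have h2 := (hbd 2).1
  have h3 := (hbd 3).1
  ext i
  fin_cases i <;> simp <;> linarith

lemma add_min_le (hp : FeasMarg 4 2 p) : p 0 + min (p 1) (min (p 2) (p 3)) ≤ 4 / 3 := by
  obtain ⟨hbd, hsum⟩ := hp
  simp only [Fin.sum_univ_four, Nat.cast_ofNat] at hsum
  linarith [min_le_left (p 1) (min (p 2) (p 3)), min_le_right (p 1) (min (p 2) (p 3)),
    min_le_left (p 2) (p 3), min_le_right (p 2) (p 3), (hbd 0).2]

lemma eq_of_add_min_eq (hp : FeasMarg 4 2 p) (h : p 0 + min (p 1) (min (p 2) (p 3)) = 4 / 3) :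
    p = ![1, 1 / 3, 1 / 3, 1 / 3] := by
  obtain ⟨hbd, hsum⟩ := hp
  simp only [Fin.sum_univ_four, Nat.cast_ofNat] at hsum
  have h1 := min_le_left (p 1) (min (p 2) (p 3))
  have h2 := (min_le_right (p 1) _).trans (min_le_left (p 2) (p 3))
  have h3 := (min_le_right (p 1) _).trans (min_le_right (p 2) (p 3))
  have h0 : p 0 = 1 := by linarith [(hbd 0).2]
  ext i
  fin_cases i <;> simp <;> linarith

end FeasMarg

lemma feasMarg_half : FeasMarg 4 1 ![1 / 2, 1 / 2, 0, 0] := by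
  refine ⟨fun i => ?_, ?_⟩
  · fin_cases i <;> norm_num
  · simp [Fin.sum_univ_four]
    norm_num

lemma feasMarg_one_third : FeasMarg 4 2 ![1, 1 / 3, 1 / 3, 1 / 3] := by
  refine ⟨fun i => ?_, ?_⟩
  · fin_cases i <;> norm_num
  · simp [Fin.sum_univ_four]
    norm_num

/-- with `n = 4`, intervals 1 and 2 overlapping, intervals 3, 4 strictly
below interval 1 but with intervals 2, 3, 4 pairwise overlapping (0-indexed: items
0,1,2,3), the unique maximin optimal marginals are `(1/2, 1/2, 0, 0)` for budget `k = 1`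
and `(1, 1/3, 1/3, 1/3)` for budget `k = 2`.  In particular the probability of item 2
decreases from `1/2` to `1/3` as the budget increases, so ex ante optimality is
incompatible with monotonicity in budget. -/
theorem nonmonotone_example (l u : Fin 4 → ℝ)
    (hvalid : ∀ i, l i ≤ u i)
    (h12 : l 0 ≤ u 1 ∧ l 1 ≤ u 0)
    (h13 : l 0 > u 2) (h14 : l 0 > u 3)
    (h23 : l 1 ≤ u 2 ∧ l 2 ≤ u 1)
    (h24 : l 1 ≤ u 3 ∧ l 3 ≤ u 1)
    (h34 : l 2 ≤ u 3 ∧ l 3 ≤ u 2) :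
    (FeasMarg 4 1 ![1/2, 1/2, 0, 0] ∧
      ∀ p : Fin 4 → ℝ, FeasMarg 4 1 p →
        wcObj 4 1 l u p ≤ wcObj 4 1 l u ![1/2, 1/2, 0, 0] ∧
        (wcObj 4 1 l u p = wcObj 4 1 l u ![1/2, 1/2, 0, 0] → p = ![1/2, 1/2, 0, 0])) ∧
    (FeasMarg 4 2 ![1, 1/3, 1/3, 1/3] ∧
      ∀ p : Fin 4 → ℝ, FeasMarg 4 2 p →
        wcObj 4 2 l u p ≤ wcObj 4 2 l u ![1, 1/3, 1/3, 1/3] ∧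
        (wcObj 4 2 l u p = wcObj 4 2 l u ![1, 1/3, 1/3, 1/3] →
          p = ![1, 1/3, 1/3, 1/3])) := by
  have hP := feasiblePerm_eq hvalid h12 h13 h14 h23 h24 h34
  simp only [wcObj_one_eq hP, wcObj_two_eq hP]
  refine ⟨⟨feasMarg_half, fun p hp => ?_⟩, ⟨feasMarg_one_third, fun p hp => ?_⟩⟩
  · simp only [Matrix.cons_val, min_self]
    exact ⟨hp.min_le_half, hp.eq_of_min_eq_half⟩
  · simp only [Matrix.cons_val, min_self]
    norm_num only
    exact ⟨hp.add_min_le, hp.eq_of_add_min_eq⟩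
end

section
/- Run the following post-processing on p ∈ [0,1]^n with intervals ordered by increasing upper bound u: for each b from lowest to highest u with p_b > 0, and for each a from highest u down to b+1 with ℓ_a > u_b and p_a < 1, transfer d = min{p_b, 1 − p_a} from p_b to p_a. Upon termination, for every pair (a, b) with ℓ_a > u_b, either p_a = 1 or p_b = 0; moreover the total ∑p is preserved and all coordinates remain in [0,1]. -/
/-- One step of the post-processing: for a fixed lower item `b`, if `a` comes after `b`
and interval `a` strictly dominates interval `b`, transfer `d = min (q b) (1 - q a)`
from `q b` to `q a` (a no-op in value when `q b = 0` or `q a = 1`). -/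
noncomputable def ppStep (n : ℕ) (l u : Fin n → ℝ) (b : Fin n)
    (q : Fin n → ℝ) (a : Fin n) : Fin n → ℝ :=
  if b < a ∧ l a > u b then
    Function.update (Function.update q b (q b - min (q b) (1 - q a))) a
      (q a + min (q b) (1 - q a))
  else q

/-- The full post-processing of Algorithm "Post-Processing of p for Ex Post Validity":
for each `b` in increasing order (intervals indexed by increasing upper bound), sweep
`a` from the highest index down to `b+1`, transferring mass to dominating intervals. -/
noncomputable def postprocess (n : ℕ) (l u : Fin n → ℝ) (p : Fin n → ℝ) : Fin n → ℝ :=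
  (List.finRange n).foldl
    (fun q b => (List.finRange n).reverse.foldl (ppStep n l u b) q) p

/-!
A single transfer from `b` to a dominating `a` either fills `a` or empties `b`. During the rest
of the sweep at `b` coordinates other than `b` only grow and `b` only shrinks, all within
`[0, 1]`, so the sweep at `b` leaves every dominator of `b` full or `b` empty. A later sweep at
`c > b` never changes `p_b`. If `p_b > 0`, all dominators of `b` are full and stay so, except
possibly `c` itself; but if `c` dominates `b`, then every dominator of `c` dominates `b`
(as `ℓ_c ≤ u_c`), so is already full and the sweep at `c` moves nothing.
-/

open Finset Set

variable {n : ℕ} {l u : Fin n → ℝ}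

section Step

variable {b a : Fin n} {q : Fin n → ℝ}

lemma ppStep_apply (i : Fin n) :
    ppStep n l u b q a i =
      if b < a ∧ u b < l a then
        if i = a then q a + min (q b) (1 - q a)
        else if i = b then q b - min (q b) (1 - q a) else q i
      else q i := by
  unfold ppStep
  split_ifs <;> simp_all

lemma ppStep_mem_Icc (hq : ∀ i, q i ∈ Icc (0 : ℝ) 1) (i : Fin n) :
    ppStep n l u b q a i ∈ Icc (0 : ℝ) 1 := by
  obtain ⟨hb0, hb1⟩ := hq b
  obtain ⟨ha0, ha1⟩ := hq a
  obtain ⟨hi0, hi1⟩ := hq i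
  have := min_le_left (q b) (1 - q a)
  have := min_le_right (q b) (1 - q a)
  have := le_min hb0 (sub_nonneg.2 ha1)
  rw [ppStep_apply]
  split_ifs <;> constructor <;> linarith

lemma sum_ppStep : ∑ i, ppStep n l u b q a i = ∑ i, q i := by
  by_cases h : b < a ∧ u b < l a
  · set d := min (q b) (1 - q a) with hd
    have hstep : ∀ i, ppStep n l u b q a i =
        q i + ((Pi.single a d : Fin n → ℝ) i - (Pi.single b d : Fin n → ℝ) i) := by
      intro i
      rw [ppStep_apply, if_pos h, ← hd]
      split_ifs with hia hib
      · simp [hia, h.1.ne]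
      · simp [hib, h.1.ne, sub_eq_add_neg]
      · simp [hia, hib]
    simp [hstep, sum_add_distrib, sum_sub_distrib]
  · simp only [ppStep_apply, if_neg h]

lemma ppStep_apply_self_le (hq : ∀ i, q i ∈ Icc (0 : ℝ) 1) :
    ppStep n l u b q a b ≤ q b := by
  have := le_min (hq b).1 (sub_nonneg.2 (hq a).2)
  by_cases hdom : b < a ∧ u b < l a
  · simp only [ppStep_apply, if_pos hdom, if_neg hdom.1.ne, if_true]
    linarith
  · simp only [ppStep_apply, if_neg hdom, le_refl]

lemma le_ppStep_apply (hq : ∀ i, q i ∈ Icc (0 : ℝ) 1) {i : Fin n} (hib : i ≠ b) :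
    q i ≤ ppStep n l u b q a i := by
  have := le_min (hq b).1 (sub_nonneg.2 (hq a).2)
  rw [ppStep_apply]
  split_ifs with hdom hia
  · rw [hia]
    linarith
  all_goals exact le_rfl

lemma ppStep_apply_of_lt {i : Fin n} (hib : i < b) : ppStep n l u b q a i = q i := by
  rw [ppStep_apply]
  split_ifs with hdom hia hib'
  · exact absurd (hia ▸ hdom.1) hib.asymm
  · exact absurd hib' hib.ne
  all_goals rfl

lemma ppStep_apply_eq_one_or_eq_zero (hba : b < a) (hdom : u b < l a) :
    ppStep n l u b q a a = 1 ∨ ppStep n l u b q a b = 0 := by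
  simp only [ppStep_apply, if_pos (And.intro hba hdom), if_true, if_neg hba.ne]
  rcases min_choice (q b) (1 - q a) with h | h <;> rw [h] <;> [right; left] <;> ring

lemma ppStep_eq_self (hb : 0 ≤ q b) (h : b < a → u b < l a → q a = 1) :
    ppStep n l u b q a = q := by
  funext i
  rw [ppStep_apply]
  split_ifs with hdom hia <;> simp_all

end Step

section StepFold

variable {b : Fin n} (L : List (Fin n)) {q : Fin n → ℝ}

lemma foldl_ppStep_mem_Icc (hq : ∀ i, q i ∈ Icc (0 : ℝ) 1) (i : Fin n) :
    L.foldl (ppStep n l u b) q i ∈ Icc (0 : ℝ) 1 :=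
  L.foldlRecOn (motive := fun q : Fin n → ℝ => ∀ i, q i ∈ Icc (0 : ℝ) 1) _ hq
    (fun _ hq' _ _ => ppStep_mem_Icc hq') i

lemma sum_foldl_ppStep : ∑ i, L.foldl (ppStep n l u b) q i = ∑ i, q i :=
  L.foldlRecOn (motive := fun q' : Fin n → ℝ => ∑ i, q' i = ∑ i, q i) _ rfl
    (fun _ hq' _ _ => sum_ppStep.trans hq')

lemma foldl_ppStep_apply_of_lt {i : Fin n} (hib : i < b) :
    L.foldl (ppStep n l u b) q i = q i :=
  L.foldlRecOn (motive := fun q' : Fin n → ℝ => q' i = q i) _ rfl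
    (fun _ hq' _ _ => (ppStep_apply_of_lt hib).trans hq')

lemma foldl_ppStep_apply_self_le (hq : ∀ i, q i ∈ Icc (0 : ℝ) 1) :
    L.foldl (ppStep n l u b) q b ≤ q b :=
  (L.foldlRecOn
    (motive := fun q' : Fin n → ℝ => (∀ i, q' i ∈ Icc (0 : ℝ) 1) ∧ q' b ≤ q b) _
    ⟨hq, le_rfl⟩
    (fun _ hq' _ _ => ⟨ppStep_mem_Icc hq'.1, (ppStep_apply_self_le hq'.1).trans hq'.2⟩)).2

lemma le_foldl_ppStep_apply (hq : ∀ i, q i ∈ Icc (0 : ℝ) 1) {i : Fin n} (hib : i ≠ b) :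
    q i ≤ L.foldl (ppStep n l u b) q i :=
  (L.foldlRecOn
    (motive := fun q' : Fin n → ℝ => (∀ i, q' i ∈ Icc (0 : ℝ) 1) ∧ q i ≤ q' i) _
    ⟨hq, le_rfl⟩
    (fun _ hq' _ _ => ⟨ppStep_mem_Icc hq'.1, hq'.2.trans (le_ppStep_apply hq'.1 hib)⟩)).2

lemma foldl_ppStep_eq_self (hb : 0 ≤ q b) (h : ∀ a, b < a → u b < l a → q a = 1) :
    L.foldl (ppStep n l u b) q = q :=
  L.foldlRecOn (motive := fun q' : Fin n → ℝ => q' = q) _ rfl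
    (fun _ hq' a _ => by rw [hq']; exact ppStep_eq_self hb (h a))

lemma foldl_ppStep_apply_eq_one_or_eq_zero (hq : ∀ i, q i ∈ Icc (0 : ℝ) 1) {a : Fin n}
    (ha : a ∈ L) (hba : b < a) (hdom : u b < l a) :
    L.foldl (ppStep n l u b) q a = 1 ∨ L.foldl (ppStep n l u b) q b = 0 := by
  obtain ⟨s, t, rfl⟩ := List.append_of_mem ha
  rw [List.foldl_append, List.foldl_cons]
  set q₀ := s.foldl (ppStep n l u b) q
  have hq₁ : ∀ i, ppStep n l u b q₀ a i ∈ Icc (0 : ℝ) 1 :=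
    ppStep_mem_Icc (foldl_ppStep_mem_Icc s hq)
  refine (ppStep_apply_eq_one_or_eq_zero (q := q₀) hba hdom).imp (fun h => ?_) (fun h => ?_)
  · exact le_antisymm (foldl_ppStep_mem_Icc t hq₁ a).2
      (h ▸ le_foldl_ppStep_apply t hq₁ hba.ne')
  · exact le_antisymm (h ▸ foldl_ppStep_apply_self_le t hq₁) (foldl_ppStep_mem_Icc t hq₁ b).1

end StepFold

noncomputable def ppSweep (n : ℕ) (l u : Fin n → ℝ) (b : Fin n) (q : Fin n → ℝ) :
    Fin n → ℝ :=
  (List.finRange n).reverse.foldl (ppStep n l u b) q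

def ExPostValidAt (l u q : Fin n → ℝ) (b : Fin n) : Prop :=
  ∀ a, b < a → u b < l a → q a = 1 ∨ q b = 0

section Sweep

variable {b c : Fin n} {q : Fin n → ℝ}

lemma exPostValidAt_ppSweep_self (hq : ∀ i, q i ∈ Icc (0 : ℝ) 1) :
    ExPostValidAt l u (ppSweep n l u b q) b :=
  fun _ hba hdom => foldl_ppStep_apply_eq_one_or_eq_zero _ hq (by simp) hba hdom

lemma ExPostValidAt.ppSweep_of_lt (hvalid : ∀ i, l i ≤ u i)
    (hq : ∀ i, q i ∈ Icc (0 : ℝ) 1) (hbc : b < c) (h : ExPostValidAt l u q b) :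
    ExPostValidAt l u (ppSweep n l u c q) b := by
  intro a hba hdom
  have hfix : ppSweep n l u c q b = q b := foldl_ppStep_apply_of_lt _ hbc
  rcases eq_or_ne (q b) 0 with hb0 | hb0
  · exact Or.inr (hfix.trans hb0)
  have hfull : ∀ a, b < a → u b < l a → q a = 1 :=
    fun a hba hdom => (h a hba hdom).resolve_right hb0
  left
  rcases eq_or_ne a c with rfl | hac
  · have hid : ppSweep n l u a q = q :=
      foldl_ppStep_eq_self _ (hq a).1 fun a' haa' hdom' =>
        hfull a' (hba.trans haa') (hdom.trans ((hvalid a).trans_lt hdom'))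
    rw [hid]
    exact hfull a hba hdom
  · exact le_antisymm (foldl_ppStep_mem_Icc _ hq a).2
      (hfull a hba hdom ▸ le_foldl_ppStep_apply _ hq hac)

lemma exPostValidAt_foldl_ppSweep (hvalid : ∀ i, l i ≤ u i) :
    ∀ (B : List (Fin n)) (q : Fin n → ℝ), B.Pairwise (· < ·) →
      (∀ b ∉ B, ∀ c ∈ B, b < c) → (∀ i, q i ∈ Icc (0 : ℝ) 1) →
      (∀ b ∉ B, ExPostValidAt l u q b) →
      ∀ b, ExPostValidAt l u (B.foldl (fun q c => ppSweep n l u c q) q) b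
  | [], _, _, _, _, h => fun b => h b List.not_mem_nil
  | c :: B, q, hsorted, hbelow, hq, h => by
    obtain ⟨hcB, hB⟩ := List.pairwise_cons.1 hsorted
    refine exPostValidAt_foldl_ppSweep hvalid B _ hB ?_ (foldl_ppStep_mem_Icc _ hq) ?_
    · intro b hb c' hc'
      rcases eq_or_ne b c with rfl | hbc
      · exact hcB c' hc'
      · exact hbelow b (by simp [hbc, hb]) c' (List.mem_cons_of_mem _ hc')
    · intro b hb
      rcases eq_or_ne b c with rfl | hbc
      · exact exPostValidAt_ppSweep_self hq
      · have hb' : b ∉ c :: B := by simp [hbc, hb]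
        exact (h b hb').ppSweep_of_lt hvalid hq (hbelow b hb' c List.mem_cons_self)

end Sweep

section Postprocess

variable {p : Fin n → ℝ}

lemma postprocess_mem_Icc (hp : ∀ i, p i ∈ Icc (0 : ℝ) 1) (i : Fin n) :
    postprocess n l u p i ∈ Icc (0 : ℝ) 1 :=
  (List.finRange n).foldlRecOn
    (motive := fun q : Fin n → ℝ => ∀ i, q i ∈ Icc (0 : ℝ) 1) _ hp
    (fun _ hq _ _ => foldl_ppStep_mem_Icc _ hq) i

lemma sum_postprocess : ∑ i, postprocess n l u p i = ∑ i, p i :=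
  (List.finRange n).foldlRecOn (motive := fun q : Fin n → ℝ => ∑ i, q i = ∑ i, p i) _ rfl
    (fun _ hq _ _ => (sum_foldl_ppStep _).trans hq)

lemma exPostValidAt_postprocess (hvalid : ∀ i, l i ≤ u i) (hp : ∀ i, p i ∈ Icc (0 : ℝ) 1)
    (b : Fin n) : ExPostValidAt l u (postprocess n l u p) b :=
  exPostValidAt_foldl_ppSweep hvalid _ p (List.pairwise_lt_finRange n)
    (fun b hb => absurd (List.mem_finRange b) hb) hp
    (fun b hb => absurd (List.mem_finRange b) hb) b

end Postprocess

/-- if the intervals are indexed in increasing order of upper bound and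
`p ∈ [0,1]^n`, then after post-processing, for every pair `(a, b)` with `ℓ_a > u_b`
either `p_a = 1` or `p_b = 0`; moreover the total mass is preserved and all coordinates
remain in `[0,1]`. -/
theorem postprocess_expost (n : ℕ) (l u : Fin n → ℝ)
    (hvalid : ∀ i, l i ≤ u i)
    (hsorted : ∀ i j : Fin n, i ≤ j → u i ≤ u j)
    (p : Fin n → ℝ) (hp : ∀ i, 0 ≤ p i ∧ p i ≤ 1) :
    (∀ a b : Fin n, l a > u b →
      postprocess n l u p a = 1 ∨ postprocess n l u p b = 0) ∧
    (∑ i, postprocess n l u p i = ∑ i, p i) ∧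
    (∀ i, 0 ≤ postprocess n l u p i ∧ postprocess n l u p i ≤ 1) := by
  refine ⟨fun a b hdom => ?_, sum_postprocess, postprocess_mem_Icc hp⟩
  have hba : b < a := lt_of_not_ge fun hab =>
    (hdom.trans_le ((hvalid a).trans (hsorted a b hab))).false
  exact exPostValidAt_postprocess hvalid hp b a hba hdom
end
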